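/- Let P ∈ ℝ^{n×n} and Q ∈ ℝ^{m×m} be symmetric positive semidefinite and let L : ℝ^{n×m} → ℝ be any function. Then inf over Θ of L(Θ) + ‖PΘQ‖_* equals inf over pairs (U, V) with U ∈ ℝ^{n×m}, V ∈ ℝ^{m×m} of L(UVᵀ) + (1/2)‖PU‖_F² + (1/2)‖QV‖_F². -/

import Mathlib

/-!
For `Θ = U Vᵀ` we have `P Θ Q = (P U) (Q V)ᵀ`, and `‖A Bᵀ‖_* ≤ ½ (‖A‖_F² + ‖B‖_F²)`: if `Ω` is the
partial isometry in the polar decomposition of `A Bᵀ`, then `‖A Bᵀ‖_* = tr (Ωᵀ A Bᵀ)`, which AM-GM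
bounds by `½ (‖Aᵀ Ω‖_F² + ‖B‖_F²)`, and `Ωᵀ` is a contraction.

Conversely, given `Θ`, put `M = P Θ Q`, `A = (MᵀM)^{1/4} + s` and `Q_s = Q + s² (1 - Q Q⁺)`, which
is invertible. Then `U = Θ Q_s A⁻¹` and `V = Q_s⁻¹ A` satisfy `U Vᵀ = Θ`,
`P U = M A⁻¹ + s P Θ (1 - Q Q⁺)` and `Q V = Q Q⁺ A`, so that
`½ ‖P U‖_F² + ½ ‖Q V‖_F² ≤ ‖M‖_* + O(s)`. Hence the two infima agree.
-/

open Matrix BigOperators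

/-- Nuclear norm: sum of singular values, i.e. trace of the PSD square root of `Θᵀ * Θ`. -/
noncomputable def nuclearNorm {n m : ℕ} (Θ : Matrix (Fin n) (Fin m) ℝ) : ℝ :=
  ((Matrix.posSemidef_conjTranspose_mul_self Θ).1.eigenvectorUnitary.1 *
    diagonal ((RCLike.ofReal : ℝ → ℝ) ∘ (√·) ∘ (Matrix.posSemidef_conjTranspose_mul_self Θ).1.eigenvalues) *
    (star (Matrix.posSemidef_conjTranspose_mul_self Θ).1.eigenvectorUnitary : Matrix (Fin m) (Fin m) ℝ)).trace

/-- Frobenius norm. -/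
noncomputable def frobNorm {n m : ℕ} (A : Matrix (Fin n) (Fin m) ℝ) : ℝ :=
  Real.sqrt (∑ i, ∑ j, (A i j) ^ 2)

/-- `B` is the Moore–Penrose pseudoinverse of `A` (the four Penrose conditions). -/
def IsMoorePenrose {n m : ℕ} (A : Matrix (Fin n) (Fin m) ℝ) (B : Matrix (Fin m) (Fin n) ℝ) : Prop :=
  A * B * A = A ∧ B * A * B = B ∧ (A * B)ᵀ = A * B ∧ (B * A)ᵀ = B * A

/-- `Pr` is the orthogonal projection matrix onto the subspace `S`. -/
def IsOrthProjOnto {n : ℕ} (Pr : Matrix (Fin n) (Fin n) ℝ) (S : Submodule ℝ (Fin n → ℝ)) : Prop :=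
  Prᵀ = Pr ∧ Pr * Pr = Pr ∧ LinearMap.range Pr.mulVecLin = S

section Frobenius

variable {k l m n : Type*} [Fintype k] [Fintype l] [Fintype m] [Fintype n]

theorem trace_transpose_mul_self_nonneg (A : Matrix m n ℝ) : 0 ≤ trace (Aᵀ * A) := by
  simpa only [conjTranspose_eq_transpose_of_trivial] using
    (posSemidef_conjTranspose_mul_self A).trace_nonneg

theorem trace_transpose_mul_comm (C D : Matrix m n ℝ) : trace (Dᵀ * C) = trace (Cᵀ * D) := by
  rw [← trace_transpose, transpose_mul, transpose_transpose]

theorem trace_transpose_mul_self_add (C D : Matrix m n ℝ) :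
    trace ((C + D)ᵀ * (C + D)) = trace (Cᵀ * C) + 2 * trace (Cᵀ * D) + trace (Dᵀ * D) := by
  rw [transpose_add, Matrix.add_mul, Matrix.mul_add, Matrix.mul_add, trace_add, trace_add,
    trace_add, trace_transpose_mul_comm C D]
  ring

theorem trace_transpose_mul_le (C D : Matrix m n ℝ) :
    trace (Cᵀ * D) ≤ (trace (Cᵀ * C) + trace (Dᵀ * D)) / 2 := by
  have h := trace_transpose_mul_self_nonneg (C + -D)
  simp only [trace_transpose_mul_self_add, transpose_neg, Matrix.mul_neg, Matrix.neg_mul,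
    neg_neg, trace_neg] at h
  linarith

theorem trace_transpose_mul_self_mul_le [DecidableEq m] {R : Matrix m m ℝ} (hR : Rᵀ = R)
    (hRR : R * R = R) (A : Matrix m n ℝ) :
    trace ((R * A)ᵀ * (R * A)) ≤ trace (Aᵀ * A) := by
  have hcross : trace ((R * A)ᵀ * ((1 - R) * A)) = 0 := by
    rw [transpose_mul, hR, Matrix.mul_assoc, ← Matrix.mul_assoc R, mul_sub, mul_one, hRR,
      sub_self, Matrix.zero_mul, Matrix.mul_zero, trace_zero]
  have h := trace_transpose_mul_self_add (R * A) ((1 - R) * A)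
  rw [← Matrix.add_mul, add_sub_cancel, Matrix.one_mul, hcross] at h
  linarith [trace_transpose_mul_self_nonneg ((1 - R) * A)]

theorem trace_transpose_mul_partialIsometry_le {Ω : Matrix l m ℝ} (hΩ : Ω * Ωᵀ * Ω = Ω)
    (A : Matrix l k ℝ) : trace ((Aᵀ * Ω)ᵀ * (Aᵀ * Ω)) ≤ trace (Aᵀ * A) := by
  classical
  have hRR : Ω * Ωᵀ * (Ω * Ωᵀ) = Ω * Ωᵀ := by rw [← Matrix.mul_assoc, hΩ]
  have hR : (Ω * Ωᵀ)ᵀ = Ω * Ωᵀ := by rw [transpose_mul, transpose_transpose]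
  calc trace ((Aᵀ * Ω)ᵀ * (Aᵀ * Ω)) = trace (Aᵀ * (Ω * Ωᵀ) * A) := by
        rw [transpose_mul, transpose_transpose, Matrix.mul_assoc, trace_mul_comm,
          Matrix.mul_assoc, trace_mul_comm]
        simp only [Matrix.mul_assoc]
    _ = trace ((Ω * Ωᵀ * A)ᵀ * (Ω * Ωᵀ * A)) := by
        rw [transpose_mul, hR, Matrix.mul_assoc Aᵀ (Ω * Ωᵀ) (Ω * Ωᵀ * A),
          ← Matrix.mul_assoc (Ω * Ωᵀ) (Ω * Ωᵀ) A, hRR, Matrix.mul_assoc]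
    _ ≤ trace (Aᵀ * A) := trace_transpose_mul_self_mul_le hR hRR A

end Frobenius

theorem frobNorm_sq {n m : ℕ} (A : Matrix (Fin n) (Fin m) ℝ) : frobNorm A ^ 2 = trace (Aᵀ * A) := by
  rw [frobNorm, Real.sq_sqrt (by positivity), Finset.sum_comm]
  simp [trace, mul_apply, sq]

section OrthConj

variable {n : Type*} [Fintype n] [DecidableEq n]

def orthConj (X : Matrix n n ℝ) (a : n → ℝ) : Matrix n n ℝ := X * diagonal a * Xᵀ

variable {X : Matrix n n ℝ}

theorem orthConj_transpose (X : Matrix n n ℝ) (a : n → ℝ) : (orthConj X a)ᵀ = orthConj X a := by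
  rw [orthConj, transpose_mul, transpose_mul, diagonal_transpose, transpose_transpose,
    Matrix.mul_assoc]

theorem orthConj_mul_orthConj (hX : Xᵀ * X = 1) (a b : n → ℝ) :
    orthConj X a * orthConj X b = orthConj X (a * b) := by
  simp only [orthConj, Matrix.mul_assoc]
  rw [← Matrix.mul_assoc Xᵀ, hX, Matrix.one_mul, ← Matrix.mul_assoc (diagonal a),
    diagonal_mul_diagonal]
  rfl

theorem trace_orthConj (hX : Xᵀ * X = 1) (a : n → ℝ) : trace (orthConj X a) = ∑ i, a i := by
  rw [orthConj, trace_mul_cycle, hX, Matrix.one_mul, trace_diagonal]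

theorem orthConj_one (hX : Xᵀ * X = 1) : orthConj X 1 = 1 := by
  rw [orthConj, diagonal_one', Matrix.mul_one, mul_eq_one_comm.mp hX]

theorem orthConj_inv_mul_self (hX : Xᵀ * X = 1) {a : n → ℝ} (ha : ∀ i, a i ≠ 0) :
    orthConj X a⁻¹ * orthConj X a = 1 := by
  rw [orthConj_mul_orthConj hX, ← orthConj_one hX]
  exact congrArg _ (funext fun i => inv_mul_cancel₀ (ha i))

theorem orthConj_add (a b : n → ℝ) : orthConj X (a + b) = orthConj X a + orthConj X b := by
  rw [orthConj, orthConj, orthConj, ← Matrix.add_mul, ← Matrix.mul_add, diagonal_add]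
  rfl

theorem orthConj_smul (c : ℝ) (a : n → ℝ) : orthConj X (c • a) = c • orthConj X a := by
  rw [orthConj, orthConj, diagonal_smul, Matrix.mul_smul, Matrix.smul_mul]

theorem mul_orthConj_eq_of_mul_orthConj_eq (hX : Xᵀ * X = 1) {R : Matrix n n ℝ} {d φ : n → ℝ}
    (hR : R * orthConj X d = orthConj X d) (hφ : ∀ i, d i = 0 → φ i = 0) :
    R * orthConj X φ = orthConj X φ := by
  have hfac : φ = d * (φ / d) := funext fun i => by
    rcases eq_or_ne (d i) 0 with h | h
    · simp [h, hφ i h]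
    · exact (mul_div_cancel₀ _ h).symm
  rw [hfac, ← orthConj_mul_orthConj hX, ← Matrix.mul_assoc, hR]

theorem Matrix.IsHermitian.eigenvectorUnitary_transpose_mul_self {H : Matrix n n ℝ}
    (hH : H.IsHermitian) :
    (hH.eigenvectorUnitary : Matrix n n ℝ)ᵀ * hH.eigenvectorUnitary = 1 := by
  rw [← conjTranspose_eq_transpose_of_trivial, ← star_eq_conjTranspose]
  exact Unitary.coe_star_mul_self _

theorem Matrix.IsHermitian.eq_orthConj_eigenvalues {H : Matrix n n ℝ} (hH : H.IsHermitian) :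
    H = orthConj hH.eigenvectorUnitary hH.eigenvalues := by
  conv_lhs => rw [hH.spectral_theorem, Unitary.conjStarAlgAut_apply, star_eq_conjTranspose,
    conjTranspose_eq_transpose_of_trivial, RCLike.ofReal_real_eq_id]
  rfl

theorem Matrix.IsHermitian.exists_orthConj {H : Matrix n n ℝ} (hH : H.IsHermitian) :
    ∃ X d, Xᵀ * X = 1 ∧ H = orthConj X d :=
  ⟨_, _, hH.eigenvectorUnitary_transpose_mul_self, hH.eq_orthConj_eigenvalues⟩

end OrthConj

theorem exists_orthConj_sq_eq_and_nuclearNorm_eq {n m : ℕ} (M : Matrix (Fin n) (Fin m) ℝ) :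
    ∃ (X : Matrix (Fin m) (Fin m) ℝ) (σ : Fin m → ℝ), Xᵀ * X = 1 ∧ 0 ≤ σ ∧
      Mᵀ * M = orthConj X (σ ^ 2) ∧ nuclearNorm M = ∑ i, σ i := by
  have hH := posSemidef_conjTranspose_mul_self M
  have hX := hH.1.eigenvectorUnitary_transpose_mul_self
  refine ⟨_, fun i => √(hH.1.eigenvalues i), hX, fun i => Real.sqrt_nonneg _, ?_, ?_⟩
  · have hsq : (fun i => √(hH.1.eigenvalues i)) ^ 2 = hH.1.eigenvalues :=
      funext fun i => Real.sq_sqrt (hH.eigenvalues_nonneg i)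
    rw [hsq, ← hH.1.eq_orthConj_eigenvalues, conjTranspose_eq_transpose_of_trivial]
  · simp only [nuclearNorm, star_eq_conjTranspose, conjTranspose_eq_transpose_of_trivial,
      RCLike.ofReal_real_eq_id]
    exact trace_orthConj hX _

theorem nuclearNorm_mul_transpose_le {n m : ℕ} {k : Type*} [Fintype k]
    (A : Matrix (Fin n) k ℝ) (B : Matrix (Fin m) k ℝ) :
    nuclearNorm (A * Bᵀ) ≤ (trace (Aᵀ * A) + trace (Bᵀ * B)) / 2 := by
  obtain ⟨X, σ, hX, -, hMM, hnuc⟩ := exists_orthConj_sq_eq_and_nuclearNorm_eq (A * Bᵀ)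
  -- `Ω = M ((MᵀM)^{1/2})⁺` is the partial isometry in the polar decomposition of `M = A Bᵀ`
  obtain ⟨Ω, hΩ⟩ : ∃ Ω, Ω = A * Bᵀ * orthConj X σ⁻¹ := ⟨_, rfl⟩
  have htrace : trace (Ωᵀ * (A * Bᵀ)) = ∑ i, σ i := by
    rw [hΩ, transpose_mul, orthConj_transpose, Matrix.mul_assoc, hMM,
      orthConj_mul_orthConj hX, trace_orthConj hX]
    refine Finset.sum_congr rfl fun i _ => ?_
    rw [Pi.mul_apply, Pi.pow_apply, Pi.inv_apply, sq, ← mul_assoc, inv_mul_mul_self]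
  have hΩΩ : Ωᵀ * Ω = orthConj X (σ⁻¹ * (σ ^ 2 * σ⁻¹)) := by
    rw [hΩ, transpose_mul, orthConj_transpose, Matrix.mul_assoc,
      ← Matrix.mul_assoc (A * Bᵀ)ᵀ (A * Bᵀ), hMM, orthConj_mul_orthConj hX,
      orthConj_mul_orthConj hX]
  have hpartial : Ω * Ωᵀ * Ω = Ω := by
    rw [Matrix.mul_assoc, hΩΩ, hΩ, Matrix.mul_assoc, orthConj_mul_orthConj hX]
    congr 2
    funext i
    rcases eq_or_ne (σ i) 0 with h | h <;> simp [h, sq]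
  calc nuclearNorm (A * Bᵀ) = trace ((Aᵀ * Ω)ᵀ * Bᵀ) := by
        rw [hnuc, ← htrace, transpose_mul, transpose_transpose, Matrix.mul_assoc]
    _ ≤ (trace ((Aᵀ * Ω)ᵀ * (Aᵀ * Ω)) + trace (Bᵀᵀ * Bᵀ)) / 2 := trace_transpose_mul_le _ _
    _ ≤ (trace (Aᵀ * A) + trace (Bᵀ * B)) / 2 := by
        rw [transpose_transpose, trace_mul_comm B]
        linarith [trace_transpose_mul_partialIsometry_le hpartial A]

theorem isMoorePenrose_orthConj_inv {m : ℕ} {Y : Matrix (Fin m) (Fin m) ℝ} (hY : Yᵀ * Y = 1)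
    (e : Fin m → ℝ) : IsMoorePenrose (orthConj Y e) (orthConj Y e⁻¹) := by
  refine ⟨?_, ?_, ?_, ?_⟩ <;> simp only [orthConj_mul_orthConj hY, orthConj_transpose]
  · exact congrArg _ (funext fun i => mul_inv_mul_cancel (e i))
  · exact congrArg _ (funext fun i => by simpa using mul_inv_mul_cancel (e i)⁻¹)

namespace IsMoorePenrose

variable {m : ℕ} {Q Qp : Matrix (Fin m) (Fin m) ℝ}

theorem pinv_mul_comm (h : IsMoorePenrose Q Qp) (hQ : Qᵀ = Q) (hQp : Qpᵀ = Qp) :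
    Qp * Q = Q * Qp := by
  rw [← h.2.2.2, transpose_mul, hQ, hQp]

theorem mul_self_mul_pinv (h : IsMoorePenrose Q Qp) : Q * Qp * (Q * Qp) = Q * Qp := by
  rw [← Matrix.mul_assoc, h.1]

theorem mul_one_sub (h : IsMoorePenrose Q Qp) (hQ : Qᵀ = Q) (hQp : Qpᵀ = Qp) :
    Q * (1 - Q * Qp) = 0 := by
  rw [Matrix.mul_sub, Matrix.mul_one, ← h.pinv_mul_comm hQ hQp, ← Matrix.mul_assoc, h.1, sub_self]

theorem one_sub_mul_pinv (h : IsMoorePenrose Q Qp) (hQ : Qᵀ = Q) (hQp : Qpᵀ = Qp) :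
    (1 - Q * Qp) * Qp = 0 := by
  rw [Matrix.sub_mul, Matrix.one_mul, ← h.pinv_mul_comm hQ hQp, h.2.1, sub_self]

theorem one_sub_mul_self (h : IsMoorePenrose Q Qp) : (1 - Q * Qp) * Q = 0 := by
  rw [Matrix.sub_mul, Matrix.one_mul, h.1, sub_self]

theorem transpose_one_sub (h : IsMoorePenrose Q Qp) : (1 - Q * Qp)ᵀ = 1 - Q * Qp := by
  rw [transpose_sub, transpose_one, h.2.2.1]

/-- `Q + t • (1 - Q * Qp)` is `Q` with its eigenvalue `0` replaced by `t`. -/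
theorem add_smul_mul_add_inv_smul (h : IsMoorePenrose Q Qp) (hQ : Qᵀ = Q) (hQp : Qpᵀ = Qp)
    {t : ℝ} (ht : t ≠ 0) :
    (Q + t • (1 - Q * Qp)) * (Qp + t⁻¹ • (1 - Q * Qp)) = 1 := by
  have hJJ : (1 - Q * Qp) * (1 - Q * Qp) = 1 - Q * Qp := by
    rw [Matrix.sub_mul, Matrix.one_mul, Matrix.mul_sub, Matrix.mul_one, h.mul_self_mul_pinv,
      sub_self, sub_zero]
  rw [Matrix.add_mul, Matrix.mul_add, Matrix.mul_add, Matrix.mul_smul, h.mul_one_sub hQ hQp,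
    Matrix.smul_mul, h.one_sub_mul_pinv hQ hQp, Matrix.smul_mul, Matrix.mul_smul, hJJ,
    smul_smul, mul_inv_cancel₀ ht, one_smul, smul_zero, smul_zero, add_zero, zero_add,
    add_sub_cancel]

end IsMoorePenrose

theorem one_sub_mul_orthConj_sqrt_add_eq_smul {n : Type*} [Fintype n] [DecidableEq n]
    {X : Matrix n n ℝ} (hX : Xᵀ * X = 1) {σ : n → ℝ} {R : Matrix n n ℝ}
    (hR : R * orthConj X (σ ^ 2) = orthConj X (σ ^ 2)) (s : ℝ) :
    (1 - R) * orthConj X (fun i => √(σ i) + s) = s • (1 - R) := by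
  have hS : R * orthConj X (fun i => √(σ i)) = orthConj X (fun i => √(σ i)) :=
    mul_orthConj_eq_of_mul_orthConj_eq hX hR fun i hi => by simp_all
  have hsplit : (fun i => √(σ i) + s) = (fun i => √(σ i)) + s • 1 := funext fun i => by simp
  rw [hsplit, orthConj_add, orthConj_smul, orthConj_one hX, Matrix.mul_add, Matrix.sub_mul,
    Matrix.one_mul, hS, sub_self, zero_add, Matrix.mul_smul, Matrix.mul_one]

theorem inv_mul_sq_mul_inv_add_mul_self_le {σ s : ℝ} (hσ : 0 ≤ σ) (hs0 : 0 < s) (hs1 : s ≤ 1) :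
    (√σ + s)⁻¹ * (σ ^ 2 * (√σ + s)⁻¹) + (√σ + s) * (√σ + s) ≤ 2 * σ + 2 * s * (√σ + 1) := by
  obtain ⟨t, ht, rfl⟩ : ∃ t, 0 ≤ t ∧ σ = t ^ 2 := ⟨√σ, Real.sqrt_nonneg σ, (Real.sq_sqrt hσ).symm⟩
  rw [Real.sqrt_sq ht]
  have hts : 0 < t + s := by linarith
  have hratio : (t / (t + s)) ^ 2 ≤ 1 :=
    pow_le_one₀ (div_nonneg ht hts.le) (div_le_one_of_le₀ (by linarith) hts.le)
  have hfirst : (t + s)⁻¹ * ((t ^ 2) ^ 2 * (t + s)⁻¹) = t ^ 2 * (t / (t + s)) ^ 2 := by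
    field_simp
  rw [hfirst]
  nlinarith [sq_nonneg t]

theorem mul_eq_inv_smul_of_mul_eq_smul {n : Type*} [Fintype n] [DecidableEq n]
    {A B J : Matrix n n ℝ} (hBA : B * A = 1) {s : ℝ} (hJA : J * A = s • J) (hs : s ≠ 0) :
    J * B = s⁻¹ • J := by
  calc J * B = s⁻¹ • (J * A * B) := by
        rw [hJA, Matrix.smul_mul, smul_smul, inv_mul_cancel₀ hs, one_smul]
    _ = s⁻¹ • J := by rw [Matrix.mul_assoc, mul_eq_one_comm.mp hBA, Matrix.mul_one]

theorem trace_mul_orthConj_inv_add_le {l n : Type*} [Fintype l] [Fintype n] [DecidableEq n]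
    {M : Matrix l n ℝ} {X : Matrix n n ℝ} (hX : Xᵀ * X = 1) {σ : n → ℝ} (hσ : 0 ≤ σ)
    (hM : Mᵀ * M = orthConj X (σ ^ 2)) {s : ℝ} (hs0 : 0 < s) (hs1 : s ≤ 1) :
    trace ((M * orthConj X (fun i => √(σ i) + s)⁻¹)ᵀ * (M * orthConj X (fun i => √(σ i) + s)⁻¹))
      + trace ((orthConj X (fun i => √(σ i) + s))ᵀ * orthConj X (fun i => √(σ i) + s))
      ≤ 2 * ∑ i, σ i + 2 * s * ∑ i, (√(σ i) + 1) := by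
  rw [transpose_mul, orthConj_transpose, orthConj_transpose, Matrix.mul_assoc,
    ← Matrix.mul_assoc Mᵀ, hM, orthConj_mul_orthConj hX, orthConj_mul_orthConj hX,
    orthConj_mul_orthConj hX, trace_orthConj hX, trace_orthConj hX, ← Finset.sum_add_distrib,
    Finset.mul_sum, Finset.mul_sum, ← Finset.sum_add_distrib]
  exact Finset.sum_le_sum fun i _ => inv_mul_sq_mul_inv_add_mul_self_le (hσ i) hs0 hs1

theorem exists_mul_transpose_eq_trace_le {k n m : ℕ} (P : Matrix (Fin k) (Fin n) ℝ)
    (Θ : Matrix (Fin n) (Fin m) ℝ) {Q Qp : Matrix (Fin m) (Fin m) ℝ} (hQ : Qᵀ = Q)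
    (hQp : IsMoorePenrose Q Qp) (hQpt : Qpᵀ = Qp) {X : Matrix (Fin m) (Fin m) ℝ}
    (hX : Xᵀ * X = 1) {σ : Fin m → ℝ} (hσ : 0 ≤ σ)
    (hM : (P * Θ * Q)ᵀ * (P * Θ * Q) = orthConj X (σ ^ 2)) {s : ℝ} (hs0 : 0 < s) (hs1 : s ≤ 1) :
    ∃ (U : Matrix (Fin n) (Fin m) ℝ) (V : Matrix (Fin m) (Fin m) ℝ), U * Vᵀ = Θ ∧
      trace ((P * U)ᵀ * (P * U)) + trace ((Q * V)ᵀ * (Q * V)) ≤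
      2 * ∑ i, σ i + s * (2 * ∑ i, (√(σ i) + 1) +
        trace ((P * Θ * (1 - Q * Qp))ᵀ * (P * Θ * (1 - Q * Qp)))) := by
  -- `A = (MᵀM)^{1/4} + s` for `M = P Θ Q`; the range of `MᵀM` lies in that of `Q`, so the
  -- projection `J` onto the kernel of `Q` satisfies `J A = s J`.
  set J := 1 - Q * Qp
  set A := orthConj X (fun i => √(σ i) + s)
  set Ainv := orthConj X (fun i => √(σ i) + s)⁻¹
  have hproj : Q * Qp * orthConj X (σ ^ 2) = orthConj X (σ ^ 2) := by
    rw [← hM, transpose_mul, hQ, Matrix.mul_assoc Q (P * Θ)ᵀ, ← Matrix.mul_assoc (Q * Qp) Q,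
      hQp.1]
  have hJA : J * A = s • J := one_sub_mul_orthConj_sqrt_add_eq_smul hX hproj s
  have hAinvA : Ainv * A = 1 := orthConj_inv_mul_self hX fun i => by positivity
  have hJAinv : J * Ainv = s⁻¹ • J := mul_eq_inv_smul_of_mul_eq_smul hAinvA hJA hs0.ne'
  refine ⟨Θ * (Q + s ^ 2 • J) * Ainv, (Qp + (s ^ 2)⁻¹ • J) * A, ?_, ?_⟩
  · rw [transpose_mul, orthConj_transpose, transpose_add, transpose_smul, hQpt,
      hQp.transpose_one_sub, Matrix.mul_assoc, ← Matrix.mul_assoc Ainv, hAinvA, Matrix.one_mul,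
      Matrix.mul_assoc, hQp.add_smul_mul_add_inv_smul hQ hQpt (by positivity), Matrix.mul_one]
  have hPU : P * (Θ * (Q + s ^ 2 • J) * Ainv) = P * Θ * Q * Ainv + s • (P * Θ * J) := by
    rw [Matrix.mul_add, Matrix.add_mul, Matrix.mul_smul, Matrix.smul_mul, Matrix.mul_assoc Θ J,
      hJAinv, Matrix.mul_smul, smul_smul, sq, mul_assoc, mul_inv_cancel₀ hs0.ne', mul_one]
    simp only [Matrix.mul_assoc, Matrix.mul_add, Matrix.mul_smul]
  have hQV : Q * ((Qp + (s ^ 2)⁻¹ • J) * A) = Q * Qp * A := by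
    rw [← Matrix.mul_assoc, Matrix.mul_add, Matrix.mul_smul, hQp.mul_one_sub hQ hQpt, smul_zero,
      add_zero]
  have hcross : trace ((P * Θ * Q * Ainv)ᵀ * (P * Θ * J)) = 0 := by
    have hJAinvQ : J * Ainv * Q = 0 := by
      rw [hJAinv, Matrix.smul_mul, hQp.one_sub_mul_self, smul_zero]
    rw [trace_mul_comm, transpose_mul, orthConj_transpose, transpose_mul (P * Θ) Q, hQ,
      Matrix.mul_assoc (P * Θ) J, ← Matrix.mul_assoc J Ainv, ← Matrix.mul_assoc (J * Ainv) Q,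
      hJAinvQ, Matrix.zero_mul, Matrix.mul_zero, trace_zero]
  have hcost : trace ((P * Θ * Q * Ainv)ᵀ * (P * Θ * Q * Ainv)) + trace (Aᵀ * A) ≤
      2 * ∑ i, σ i + 2 * s * ∑ i, (√(σ i) + 1) :=
    trace_mul_orthConj_inv_add_le hX hσ hM hs0 hs1
  have hproj_le := trace_transpose_mul_self_mul_le hQp.2.2.1 hQp.mul_self_mul_pinv A
  have hZ := trace_transpose_mul_self_nonneg (P * Θ * J)
  rw [hPU, hQV, trace_transpose_mul_self_add, transpose_smul, Matrix.mul_smul, trace_smul, hcross,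
    smul_zero, Matrix.smul_mul, Matrix.mul_smul, trace_smul, trace_smul, smul_eq_mul,
    smul_eq_mul]
  nlinarith [mul_nonneg hs0.le hZ]

theorem exists_mul_transpose_eq_trace_le_nuclearNorm_add {k n m : ℕ}
    (P : Matrix (Fin k) (Fin n) ℝ) {Q : Matrix (Fin m) (Fin m) ℝ} (hQ : Q.IsHermitian)
    (Θ : Matrix (Fin n) (Fin m) ℝ) {ε : ℝ} (hε : 0 < ε) :
    ∃ (U : Matrix (Fin n) (Fin m) ℝ) (V : Matrix (Fin m) (Fin m) ℝ), U * Vᵀ = Θ ∧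
      (trace ((P * U)ᵀ * (P * U)) + trace ((Q * V)ᵀ * (Q * V))) / 2 ≤
        nuclearNorm (P * Θ * Q) + ε := by
  obtain ⟨Y, e, hY, rfl⟩ := hQ.exists_orthConj
  obtain ⟨X, σ, hX, hσ, hM, hnuc⟩ := exists_orthConj_sq_eq_and_nuclearNorm_eq (P * Θ * orthConj Y e)
  set Z := P * Θ * (1 - orthConj Y e * orthConj Y e⁻¹)
  set C := 2 * ∑ i, (√(σ i) + 1) + trace (Zᵀ * Z)
  have hC : 0 ≤ C := add_nonneg (mul_nonneg zero_le_two (Finset.sum_nonneg fun i _ => by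
    positivity)) (trace_transpose_mul_self_nonneg Z)
  set s := min 1 (ε / (C + 1))
  have hs0 : 0 < s := lt_min one_pos (by positivity)
  have hsC : s * C ≤ ε := calc
    s * C ≤ ε / (C + 1) * C := mul_le_mul_of_nonneg_right (min_le_right _ _) hC
    _ ≤ ε := by rw [div_mul_eq_mul_div, div_le_iff₀ (by positivity)]; nlinarith
  obtain ⟨U, V, hUV, hcost⟩ := exists_mul_transpose_eq_trace_le P Θ (orthConj_transpose Y e)
    (isMoorePenrose_orthConj_inv hY e) (orthConj_transpose Y _) hX hσ hM hs0 (min_le_left _ _)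
  exact ⟨U, V, hUV, by rw [hnuc]; linarith⟩

theorem Real.sInf_le_sInf_of_forall_exists_le_add {S T : Set ℝ} (hT : T.Nonempty)
    (hS : BddBelow S) (h : ∀ y ∈ T, ∀ ε > 0, ∃ x ∈ S, x ≤ y + ε) : sInf S ≤ sInf T :=
  le_csInf hT fun y hy => le_of_forall_pos_le_add fun ε hε =>
    let ⟨_, hx, hxy⟩ := h y hy ε hε
    (csInf_le hS hx).trans hxy

theorem BddBelow.of_forall_exists_le_add {S T : Set ℝ} (hS : BddBelow S)
    (h : ∀ y ∈ T, ∀ ε > 0, ∃ x ∈ S, x ≤ y + ε) : BddBelow T := by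
  obtain ⟨b, hb⟩ := hS
  refine ⟨b - 1, fun y hy => ?_⟩
  obtain ⟨x, hx, hxy⟩ := h y hy 1 one_pos
  linarith [hb hx]

/-- This also covers sets unbounded below, whose infima are both the junk value `0`. -/
theorem Real.sInf_eq_sInf_of_forall_exists_le_add {S T : Set ℝ} (hS : S.Nonempty)
    (hT : T.Nonempty) (hST : ∀ x ∈ S, ∀ ε > 0, ∃ y ∈ T, y ≤ x + ε)
    (hTS : ∀ y ∈ T, ∀ ε > 0, ∃ x ∈ S, x ≤ y + ε) : sInf S = sInf T := by
  by_cases hSb : BddBelow S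
  · have hTb := hSb.of_forall_exists_le_add hTS
    exact le_antisymm (Real.sInf_le_sInf_of_forall_exists_le_add hT hSb hTS)
      (Real.sInf_le_sInf_of_forall_exists_le_add hS hTb hST)
  · have hTb : ¬ BddBelow T := fun hTb => hSb (hTb.of_forall_exists_le_add hST)
    rw [Real.sInf_of_not_bddBelow hSb, Real.sInf_of_not_bddBelow hTb]

theorem stmt_12_general {n m : ℕ} (P : Matrix (Fin n) (Fin n) ℝ)
    (Q : Matrix (Fin m) (Fin m) ℝ) (hQ : Q.PosSemidef)
    (L : Matrix (Fin n) (Fin m) ℝ → ℝ) :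
    sInf {y : ℝ | ∃ Θ : Matrix (Fin n) (Fin m) ℝ, y = L Θ + nuclearNorm (P * Θ * Q)}
      = sInf {y : ℝ | ∃ (U : Matrix (Fin n) (Fin m) ℝ) (V : Matrix (Fin m) (Fin m) ℝ),
          y = L (U * Vᵀ) + (1 / 2) * frobNorm (P * U) ^ 2 + (1 / 2) * frobNorm (Q * V) ^ 2} := by
  have hQt : Qᵀ = Q := (conjTranspose_eq_transpose_of_trivial Q).symm.trans hQ.1
  refine Real.sInf_eq_sInf_of_forall_exists_le_add ⟨_, 0, rfl⟩ ⟨_, 0, 0, rfl⟩ ?_ ?_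
  · rintro _ ⟨Θ, rfl⟩ ε hε
    obtain ⟨U, V, rfl, hUV⟩ := exists_mul_transpose_eq_trace_le_nuclearNorm_add P hQ.1 Θ hε
    refine ⟨_, ⟨U, V, rfl⟩, ?_⟩
    rw [frobNorm_sq, frobNorm_sq]
    linarith
  · rintro _ ⟨U, V, rfl⟩ ε hε
    refine ⟨_, ⟨U * Vᵀ, rfl⟩, ?_⟩
    have hfac : P * U * (Q * V)ᵀ = P * (U * Vᵀ) * Q := by
      rw [transpose_mul, hQt]
      simp only [Matrix.mul_assoc]
    have h := nuclearNorm_mul_transpose_le (P * U) (Q * V)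
    rw [hfac] at h
    rw [frobNorm_sq, frobNorm_sq]
    linarith

/-- Proposition 1, first part: the generalized nuclear norm penalized infimum equals
the latent-factor infimum. -/
theorem stmt_12 {n m : ℕ} (P : Matrix (Fin n) (Fin n) ℝ) (hP : P.PosSemidef)
    (Q : Matrix (Fin m) (Fin m) ℝ) (hQ : Q.PosSemidef)
    (L : Matrix (Fin n) (Fin m) ℝ → ℝ) :
    sInf {y : ℝ | ∃ Θ : Matrix (Fin n) (Fin m) ℝ, y = L Θ + nuclearNorm (P * Θ * Q)}
      = sInf {y : ℝ | ∃ (U : Matrix (Fin n) (Fin m) ℝ) (V : Matrix (Fin m) (Fin m) ℝ),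
          y = L (U * Vᵀ) + (1 / 2) * frobNorm (P * U) ^ 2 + (1 / 2) * frobNorm (Q * V) ^ 2} :=
  stmt_12_general P Q hQ L
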